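/- Let A be a finitely generated commutative K-algebra with a finite generating family (x_λ)_{λ∈Λ}. For δ ∈ D(A)_i and any multi-index α = (α_λ) ∈ ℕ^Λ, one has δ(x^α) = Σ_{β ≤ α, |β| ≤ i} (-1)^{|β|} (∏_λ C(α_λ, β_λ)) · (ad^β(δ))(1) · x^{α-β}, where x^γ := ∏_λ x_λ^{γ_λ}, |β| := Σ_λ β_λ, C(·,·) are binomial coefficients, and ad^β := ∏_λ ad_{x_λ}^{β_λ} (the inner derivations ad_{x_λ} : u ↦ x_λu - ux_λ of End_K(A) commute pairwise, so this product is well defined). Consequently, every δ ∈ D(A)_i is uniquely determined by the family of elements (ad^β(δ))(1) ∈ A for β ∈ ℕ^Λ with |β| ≤ i: if δ, δ' ∈ D(A)_i satisfy (ad^β(δ))(1) = (ad^β(δ'))(1) for all such β, then δ = δ'. -/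

import Mathlib

/-- `DO K A i` is the set of differential operators on `A` of order `≤ i`. -/
def DO (K A : Type*) [CommSemiring K] [CommRing A] [Algebra K A] :
    ℕ → Set (Module.End K A)
  | 0 => {u | ∀ r : A, Algebra.lmul K A r * u = u * Algebra.lmul K A r}
  | i + 1 => {u | ∀ r : A, Algebra.lmul K A r * u - u * Algebra.lmul K A r ∈ DO K A i}

/-- `adPow x β δ = ad^β(δ) = (∏_λ ad_{x_λ}^{β_λ})(δ)` where `ad_{x_λ}(u) = x_λ u - u x_λ`
is the inner derivation of `End_K(A)` determined by (multiplication by) `x_λ`.  The inner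
derivations `ad_{x_λ}` commute pairwise, so the order of the product is irrelevant. -/
def adPow {K A : Type*} [CommSemiring K] [CommRing A] [Algebra K A] {N : ℕ}
    (x : Fin N → A) (β : Fin N → ℕ) (δ : Module.End K A) : Module.End K A :=
  (List.finRange N).foldr
    (fun l u =>
      (fun v => Algebra.lmul K A (x l) * v - v * Algebra.lmul K A (x l))^[β l] u) δ

/-!
Let `A ⊗[K] A` act on `End_K(A)` by `(a ⊗ b) u = a u b`, so that `δ(x^α) = ((1 ⊗ x^α) δ)(1)` and
`d_λ = x_λ ⊗ 1 - 1 ⊗ x_λ` acts as `ad_{x_λ}`. Expanding `1 ⊗ x^α = ∏_λ (x_λ ⊗ 1 - d_λ)^{α_λ}` in the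
commutative ring `A ⊗[K] A` gives the formula, the factor `d^β` producing `ad^β(δ)`. The terms with
`|β| > i` vanish because the `d_λ` lie in the kernel `I` of the multiplication `A ⊗[K] A → A`, and
`I^{i+1}` annihilates `D(A)_i`. Uniqueness follows since the monomials `x^α` span `A`.
-/

open TensorProduct

theorem prod_sub_pow_eq_sum_Iic {R ι : Type*} [CommRing R] [Fintype ι] [DecidableEq ι]
    (a d : ι → R) (α : ι → ℕ) :
    ∏ l, (a l - d l) ^ α l = ∑ β ∈ Finset.Iic α,
      ((-1 : ℤ) ^ (∑ l, β l) * ∏ l, (α l).choose (β l)) •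
        ((∏ l, a l ^ (α l - β l)) * ∏ l, d l ^ β l) := by
  have binomial (l : ι) : (a l - d l) ^ α l = ∑ k ∈ Finset.Iic (α l),
      (-1) ^ k * ((α l).choose k : R) * (a l ^ (α l - k) * d l ^ k) := by
    rw [sub_eq_neg_add, add_pow, Nat.range_succ_eq_Iic]
    refine Finset.sum_congr rfl fun k _ => ?_
    rw [neg_pow]
    ring
  simp_rw [binomial, Finset.prod_univ_sum]
  refine Finset.sum_congr rfl fun β _ => ?_
  rw [Finset.prod_mul_distrib, Finset.prod_mul_distrib, Finset.prod_mul_distrib,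
    Finset.prod_pow_eq_pow_sum, zsmul_eq_mul]
  push_cast
  rfl

theorem Ideal.prod_pow_mem_pow_sum {R ι : Type*} [CommSemiring R] {I : Ideal R} (s : Finset ι)
    {f : ι → R} (hf : ∀ l ∈ s, f l ∈ I) (β : ι → ℕ) :
    ∏ l ∈ s, f l ^ β l ∈ I ^ ∑ l ∈ s, β l := by
  rw [← Finset.prod_pow_eq_pow_sum]
  exact Ideal.prod_mem_prod fun l hl => Ideal.pow_mem_pow (hf l hl) _

theorem Submodule.span_range_prod_pow_eq_top {K A ι : Type*} [CommSemiring K] [CommSemiring A]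
    [Algebra K A] [Fintype ι] {x : ι → A} (hx : Algebra.adjoin K (Set.range x) = ⊤) :
    Submodule.span K (Set.range fun α : ι → ℕ => ∏ l, x l ^ α l) = ⊤ := by
  have hmonomials : Set.range (fun α : ι → ℕ => ∏ l, x l ^ α l) =
      Submonoid.closure (Set.range x) := by
    ext a
    simp only [Set.mem_range, SetLike.mem_coe, Submonoid.mem_closure_range_iff_of_fintype,
      eq_comm]
  rw [hmonomials, ← Algebra.adjoin_eq_span, hx, Algebra.top_toSubmodule]

section

variable (K A : Type*) [CommRing K] [CommRing A] [Algebra K A]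

noncomputable def tensorMulLeftRight : A ⊗[K] A →ₐ[K] Module.End K (Module.End K A) :=
  Algebra.TensorProduct.lift ((Algebra.lmul K (Module.End K A)).comp (Algebra.lmul K A))
    (AlgHom.ofLinearMap
      ((LinearMap.mul K (Module.End K A)).flip ∘ₗ (Algebra.lmul K A).toLinearMap)
      (by ext; simp) (fun a b => by ext; simp [mul_comm a b, mul_assoc]))
    fun _ _ => show Commute _ _ from LinearMap.ext fun _ => (mul_assoc _ _ _).symm

variable {K A}

@[simp]
theorem tensorMulLeftRight_tmul (a b : A) (u : Module.End K A) :
    tensorMulLeftRight K A (a ⊗ₜ b) u = Algebra.lmul K A a * u * Algebra.lmul K A b := by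
  rw [tensorMulLeftRight, Algebra.TensorProduct.lift_tmul]
  rfl

theorem tensorMulLeftRight_tmul_sub_tmul (a : A) :
    ⇑(tensorMulLeftRight K A (a ⊗ₜ 1 - 1 ⊗ₜ a)) =
      fun u => Algebra.lmul K A a * u - u * Algebra.lmul K A a := by
  ext u : 1
  simp only [map_sub, LinearMap.sub_apply, tensorMulLeftRight_tmul, map_one, mul_one, one_mul]

theorem tensorMulLeftRight_apply_eq_zero_of_commutators {j : ℕ} {u : Module.End K A}
    (hu : ∀ a : A, ∀ m ∈ KaehlerDifferential.ideal K A ^ j,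
      tensorMulLeftRight K A m (Algebra.lmul K A a * u - u * Algebra.lmul K A a) = 0)
    {P : A ⊗[K] A} (hP : P ∈ KaehlerDifferential.ideal K A ^ (j + 1)) :
    tensorMulLeftRight K A P u = 0 := by
  have hmul : ∀ n ∈ KaehlerDifferential.ideal K A, ∀ m ∈ KaehlerDifferential.ideal K A ^ j,
      tensorMulLeftRight K A (m * n) u = 0 := by
    intro n hn
    rw [← KaehlerDifferential.span_range_eq_ideal] at hn
    induction hn using Submodule.span_induction with
    | mem _ hg =>
      obtain ⟨a, rfl⟩ := hg
      intro m hm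
      change tensorMulLeftRight K A (m * (1 ⊗ₜ a - a ⊗ₜ 1)) u = 0
      rw [← neg_sub, mul_neg, map_neg, map_mul, LinearMap.neg_apply, Module.End.mul_apply,
        tensorMulLeftRight_tmul_sub_tmul, hu a m hm, neg_zero]
    | zero => simp
    | add n n' _ _ hn hn' =>
      intro m hm
      rw [mul_add, map_add, LinearMap.add_apply, hn m hm, hn' m hm, add_zero]
    | smul c n _ hn =>
      intro m hm
      rw [smul_eq_mul, ← mul_assoc]
      exact hn _ (Ideal.mul_mem_right c _ hm)
  rw [pow_succ] at hP
  induction hP using Submodule.mul_induction_on' with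
  | mem_mul_mem m hm n hn => exact hmul n hn m hm
  | add P _ Q _ hP hQ => rw [map_add, LinearMap.add_apply, hP, hQ, add_zero]

theorem DO.tensorMulLeftRight_apply_eq_zero {i : ℕ} {u : Module.End K A} (hu : u ∈ DO K A i)
    {P : A ⊗[K] A} (hP : P ∈ KaehlerDifferential.ideal K A ^ (i + 1)) :
    tensorMulLeftRight K A P u = 0 := by
  induction i generalizing u P with
  | zero =>
    refine tensorMulLeftRight_apply_eq_zero_of_commutators (fun a m _ => ?_) hP
    rw [sub_eq_zero.mpr (hu a), map_zero]
  | succ j ih =>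
    exact tensorMulLeftRight_apply_eq_zero_of_commutators (fun a _ hm => ih (hu a) hm) hP

theorem adPow_eq_tensorMulLeftRight {N : ℕ} (x : Fin N → A) (β : Fin N → ℕ)
    (δ : Module.End K A) :
    adPow x β δ = tensorMulLeftRight K A (∏ l, (x l ⊗ₜ[K] (1 : A) - 1 ⊗ₜ[K] x l) ^ β l) δ := by
  rw [Fin.prod_univ_def, map_list_prod, List.map_map, adPow]
  induction List.finRange N with
  | nil => rfl
  | cons l L ih =>
    rw [List.foldr_cons, ih, List.map_cons, List.prod_cons, Module.End.mul_apply,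
      Function.comp_apply, map_pow, Module.End.coe_pow, tensorMulLeftRight_tmul_sub_tmul]

theorem DO.adPow_eq_zero {N : ℕ} (x : Fin N → A) {β : Fin N → ℕ} {i : ℕ}
    {δ : Module.End K A} (hδ : δ ∈ DO K A i) (hβ : i < ∑ l, β l) : adPow x β δ = 0 := by
  rw [adPow_eq_tensorMulLeftRight]
  refine DO.tensorMulLeftRight_apply_eq_zero hδ (Ideal.pow_le_pow_right hβ ?_)
  refine Ideal.prod_pow_mem_pow_sum _ (fun l _ => ?_) β
  simp [RingHom.mem_ker]

theorem DO.apply_prod_pow {N : ℕ} (x : Fin N → A) {i : ℕ} {δ : Module.End K A}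
    (hδ : δ ∈ DO K A i) (α : Fin N → ℕ) :
    δ (∏ l, x l ^ α l) =
      ∑ β ∈ (Finset.Iic α).filter (fun β => ∑ l, β l ≤ i),
        ((-1 : ℤ) ^ (∑ l, β l) * ∏ l, (α l).choose (β l)) •
          (adPow x β δ 1 * ∏ l, x l ^ (α l - β l)) := by
  set d : Fin N → A ⊗[K] A := fun l => x l ⊗ₜ 1 - 1 ⊗ₜ x l
  have hsplit : (1 : A) ⊗ₜ[K] ∏ l, x l ^ α l = ∏ l, (x l ⊗ₜ 1 - d l) ^ α l := by
    simp only [d, sub_sub_cancel, ← Algebra.TensorProduct.includeRight_apply, map_prod, map_pow]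
  have hterm (β : Fin N → ℕ) : tensorMulLeftRight K A
      ((∏ l, (x l ⊗ₜ[K] (1 : A)) ^ (α l - β l)) * ∏ l, d l ^ β l) δ 1 =
        adPow x β δ 1 * ∏ l, x l ^ (α l - β l) := by
    have hleft : ∏ l, (x l ⊗ₜ[K] (1 : A)) ^ (α l - β l) = (∏ l, x l ^ (α l - β l)) ⊗ₜ 1 := by
      rw [← Algebra.TensorProduct.includeLeft_apply (S := K), map_prod]
      simp
    rw [hleft, map_mul, Module.End.mul_apply, adPow_eq_tensorMulLeftRight]
    simp [d, mul_comm]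
  calc δ (∏ l, x l ^ α l) = tensorMulLeftRight K A (1 ⊗ₜ ∏ l, x l ^ α l) δ 1 := by simp
    _ = ∑ β ∈ Finset.Iic α, ((-1 : ℤ) ^ (∑ l, β l) * ∏ l, (α l).choose (β l)) •
          (adPow x β δ 1 * ∏ l, x l ^ (α l - β l)) := by
      rw [hsplit, prod_sub_pow_eq_sum_Iic, map_sum, LinearMap.sum_apply, LinearMap.sum_apply]
      simp_rw [map_zsmul, LinearMap.smul_apply, hterm]
    _ = _ := by
      refine (Finset.sum_filter_of_ne fun β _ hne => ?_).symm
      contrapose! hne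
      rw [DO.adPow_eq_zero x hδ hne]
      simp

end

/-- The canonical form of a differential operator (Theorem 3.7 of the paper): if `A` is a
commutative `K`-algebra generated by finitely many elements `x_λ`, then every
`δ ∈ D(A)_i` satisfies
`δ(x^α) = Σ_{β ≤ α, |β| ≤ i} (-1)^{|β|} (α choose β) (ad^β(δ))(1) · x^{α-β}`,
and `δ` is uniquely determined by the family `(ad^β(δ))(1)`, `|β| ≤ i`. -/
theorem canonical_form_of_differential_operator
    {K A : Type*} [Field K] [CommRing A] [Algebra K A]
    {N : ℕ} (x : Fin N → A) (hgen : Algebra.adjoin K (Set.range x) = ⊤)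
    (i : ℕ) (δ : Module.End K A) (hδ : δ ∈ DO K A i) :
    (∀ α : Fin N → ℕ,
      δ (∏ l, x l ^ α l) =
        ∑ β ∈ (Finset.Iic α).filter (fun β => ∑ l, β l ≤ i),
          ((-1 : ℤ) ^ (∑ l, β l) * ∏ l, (α l).choose (β l)) •
            (adPow x β δ 1 * ∏ l, x l ^ (α l - β l))) ∧
    (∀ δ' ∈ DO K A i,
      (∀ β : Fin N → ℕ, (∑ l, β l) ≤ i → adPow x β δ 1 = adPow x β δ' 1) → δ = δ') := by
  refine ⟨DO.apply_prod_pow x hδ, fun δ' hδ' hagree => ?_⟩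
  refine LinearMap.ext_on_range (Submodule.span_range_prod_pow_eq_top hgen) fun α => ?_
  rw [DO.apply_prod_pow x hδ, DO.apply_prod_pow x hδ']
  exact Finset.sum_congr rfl fun β hβ => by rw [hagree β (Finset.mem_filter.mp hβ).2]
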